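/- Let $H_1$ be an $n\times n$ complex Hermitian matrix with spectral decomposition $H_1 = Q\Lambda Q^\dagger$, $Q$ unitary, $\Lambda = \mathrm{diag}(\lambda_1,\dots,\lambda_n)$ real, and set $\lambda_+ := \max\{0,\lambda_1,\dots,\lambda_n\}$. For $u_0\in\mathbb{C}^n$, $u_0\neq 0$, define the explicit warped solution $v(t,p) := Q\,\mathrm{diag}\big(e^{-|p-\lambda_1 t|},\dots,e^{-|p-\lambda_n t|}\big)\,Q^\dagger u_0$ and let $u(t) := \exp(tH_1)u_0$. Then for every $t\ge 0$, $$\frac{\int_{\lambda_+ t}^{\infty}\|v(t,p)\|^2\,dp}{\int_{-\infty}^{\infty}\|v(t,p)\|^2\,dp} = \frac{1}{2}\Big(\frac{\|e^{-\lambda_+ t}\,u(t)\|}{\|u_0\|}\Big)^2.$$ -/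

import Mathlib

/-!
In the eigenbasis of `H₁`, with `w = Q† u₀`, the squared norm `‖v(t,p)‖²` is the mixture
`∑ᵢ e^{-2|p - λᵢ t|} |wᵢ|²` of Laplace profiles centred at `λᵢ t ≤ λ₊ t`. Each profile has total
mass `1` and mass `½ e^{-2(λ₊ - λᵢ) t}` to the right of `λ₊ t`, while by unitary invariance
`‖e^{-λ₊ t} u(t)‖² = ∑ᵢ e^{-2(λ₊ - λᵢ) t} |wᵢ|²` and `‖u₀‖² = ∑ᵢ |wᵢ|²`.
-/

open Matrix MeasureTheory

/-- The Euclidean norm on `Fin n → ℂ`. -/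
noncomputable def euclNorm {n : ℕ} (x : Fin n → ℂ) : ℝ :=
  Real.sqrt (∑ i, ‖x i‖ ^ 2)

lemma euclNorm_eq_norm_toLp {n : ℕ} (x : Fin n → ℂ) :
    euclNorm x = ‖WithLp.toLp 2 x‖ :=
  (EuclideanSpace.norm_eq _).symm

lemma euclNorm_sq {n : ℕ} (x : Fin n → ℂ) : euclNorm x ^ 2 = ∑ i, ‖x i‖ ^ 2 :=
  Real.sq_sqrt (by positivity)

lemma euclNorm_smul {n : ℕ} (c : ℝ) (x : Fin n → ℂ) : euclNorm (c • x) = |c| * euclNorm x := by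
  simp [euclNorm_eq_norm_toLp, WithLp.toLp_smul, norm_smul]

lemma euclNorm_mulVec_of_mem_unitaryGroup {n : ℕ} {Q : Matrix (Fin n) (Fin n) ℂ}
    (hQ : Q ∈ unitaryGroup (Fin n) ℂ) (x : Fin n → ℂ) : euclNorm (Q *ᵥ x) = euclNorm x := by
  rw [euclNorm_eq_norm_toLp, euclNorm_eq_norm_toLp, ← toEuclideanCLM_toLp]
  exact ContinuousLinearMap.norm_map_of_mem_unitary (Unitary.map_mem toEuclideanCLM hQ) _

lemma euclNorm_conj_diagonal_mulVec_sq {n : ℕ} {Q : Matrix (Fin n) (Fin n) ℂ}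
    (hQ : Q ∈ unitaryGroup (Fin n) ℂ) (d x : Fin n → ℂ) :
    euclNorm ((Q * diagonal d * Qᴴ) *ᵥ x) ^ 2 = ∑ i, ‖d i‖ ^ 2 * ‖(Qᴴ *ᵥ x) i‖ ^ 2 := by
  rw [← mulVec_mulVec, ← mulVec_mulVec, euclNorm_mulVec_of_mem_unitaryGroup hQ, euclNorm_sq]
  simp only [mulVec_diagonal, norm_mul, mul_pow]

lemma exp_conj_diagonal {m : Type*} [Fintype m] [DecidableEq m] {Q : Matrix m m ℂ}
    (hQ : Q ∈ unitaryGroup m ℂ) (d : m → ℂ) :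
    NormedSpace.exp (Q * diagonal d * Qᴴ) = Q * diagonal (fun i => Complex.exp (d i)) * Qᴴ := by
  have hinv : Q⁻¹ = Qᴴ := inv_eq_right_inv (mem_unitaryGroup_iff.mp hQ)
  rw [← hinv, exp_conj Q _ (Unitary.isUnit_coe (U := ⟨Q, hQ⟩)), exp_diagonal,
    Pi.exp_def, ← Complex.exp_eq_exp_ℂ]

lemma smul_conj_diagonal {m : Type*} [Fintype m] [DecidableEq m] (Q : Matrix m m ℂ) (t : ℝ)
    (d : m → ℂ) :
    t • (Q * diagonal d * Qᴴ) = Q * diagonal (t • d) * Qᴴ := by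
  rw [← smul_mul_assoc, ← mul_smul_comm, diagonal_smul]

section LaplaceProfile

variable {r : ℝ}

open Real Set

lemma integrable_exp_neg_mul_abs_sub (hr : 0 < r) (c : ℝ) :
    Integrable fun p : ℝ => exp (-r * |p - c|) := by
  suffices Integrable fun p : ℝ => exp (-r * |p|) from this.comp_sub_right c
  rw [← integrableOn_univ, ← Iic_union_Ioi (a := 0)]
  refine ((integrableOn_exp_mul_Iic hr 0).congr_fun (fun p hp => ?_) measurableSet_Iic).union
    ((integrableOn_exp_mul_Ioi (neg_neg_of_pos hr) 0).congr_fun (fun p hp => ?_) measurableSet_Ioi)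
  · rw [abs_of_nonpos hp, neg_mul_neg]
  · rw [abs_of_pos hp]

lemma integral_exp_neg_mul_abs_sub (hr : 0 < r) (c : ℝ) :
    ∫ p, exp (-r * |p - c|) = 2 / r := by
  rw [integral_sub_right_eq_self (fun p => exp (-r * |p|)) c,
    integral_comp_abs (f := fun p => exp (-r * p)), integral_exp_mul_Ioi (neg_neg_of_pos hr)]
  field_simp
  simp

lemma integral_Ioi_exp_neg_mul_abs_sub (hr : 0 < r) {a c : ℝ} (hca : c ≤ a) :
    ∫ p in Ioi a, exp (-r * |p - c|) = exp (-r * (a - c)) / r := by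
  have hexp : EqOn (fun p => exp (-r * |p - c|)) (fun p => exp (r * c) * exp (-r * p)) (Ioi a) :=
    fun p hp => by
      dsimp only
      rw [abs_of_nonneg (by linarith [mem_Ioi.mp hp]), ← exp_add]
      ring_nf
  rw [setIntegral_congr_fun measurableSet_Ioi hexp, integral_const_mul,
    integral_exp_mul_Ioi (neg_neg_of_pos hr), mul_div_assoc', mul_neg, ← exp_add, neg_div_neg_eq]
  ring_nf

variable {ι : Type*} (s : Finset ι) (a c : ι → ℝ)

lemma integral_sum_exp_neg_mul_abs_sub_mul (hr : 0 < r) :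
    ∫ p, ∑ i ∈ s, exp (-r * |p - c i|) * a i = 2 / r * ∑ i ∈ s, a i := by
  rw [integral_finsetSum _ fun i _ => (integrable_exp_neg_mul_abs_sub hr (c i)).mul_const _,
    Finset.mul_sum]
  simp_rw [integral_mul_const, integral_exp_neg_mul_abs_sub hr]

lemma integral_Ioi_sum_exp_neg_mul_abs_sub_mul (hr : 0 < r) {x : ℝ} (hcx : ∀ i ∈ s, c i ≤ x) :
    ∫ p in Ioi x, ∑ i ∈ s, exp (-r * |p - c i|) * a i
      = (∑ i ∈ s, exp (-r * (x - c i)) * a i) / r := by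
  rw [integral_finsetSum _ fun i _ =>
    (integrable_exp_neg_mul_abs_sub hr (c i)).integrableOn.mul_const _, Finset.sum_div]
  refine Finset.sum_congr rfl fun i hi => ?_
  rw [integral_mul_const, integral_Ioi_exp_neg_mul_abs_sub hr (hcx i hi), div_mul_eq_mul_div]

end LaplaceProfile

theorem stmt6_general {n : ℕ} (H1 Q : Matrix (Fin n) (Fin n) ℂ) (l : Fin n → ℝ)
    (hQ : Q ∈ Matrix.unitaryGroup (Fin n) ℂ)
    (hspec : H1 = Q * Matrix.diagonal (fun i => (l i : ℂ)) * Qᴴ)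
    (lp : ℝ) (hlpub : ∀ i, l i ≤ lp)
    (u0 : Fin n → ℂ)
    (v : ℝ → ℝ → Fin n → ℂ)
    (hv : ∀ t p : ℝ, v t p =
      (Q * Matrix.diagonal (fun i => (Real.exp (-|p - l i * t|) : ℂ)) * Qᴴ).mulVec u0)
    (u : ℝ → Fin n → ℂ)
    (hu : ∀ t : ℝ, u t = (NormedSpace.exp (t • H1)).mulVec u0) :
    ∀ t : ℝ, 0 ≤ t →
      (∫ p in Set.Ioi (lp * t), (euclNorm (v t p)) ^ 2) / (∫ p : ℝ, (euclNorm (v t p)) ^ 2)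
        = (1 / 2) * (euclNorm (Real.exp (-(lp * t)) • u t) / euclNorm u0) ^ 2 := by
  intro t ht
  have hv_sq : ∀ p, euclNorm (v t p) ^ 2
      = ∑ i, Real.exp (-2 * |p - l i * t|) * ‖(Qᴴ *ᵥ u0) i‖ ^ 2 := by
    intro p
    rw [hv, euclNorm_conj_diagonal_mulVec_sq hQ]
    congr! 2 with i
    rw [Complex.norm_real, Real.norm_of_nonneg (Real.exp_nonneg _), ← Real.exp_nat_mul]
    ring_nf
  have hu_sq : euclNorm (Real.exp (-(lp * t)) • u t) ^ 2
      = ∑ i, Real.exp (-2 * (lp * t - l i * t)) * ‖(Qᴴ *ᵥ u0) i‖ ^ 2 := by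
    rw [hu, hspec, smul_conj_diagonal, exp_conj_diagonal hQ, euclNorm_smul, mul_pow,
      euclNorm_conj_diagonal_mulVec_sq hQ, Finset.mul_sum]
    refine Finset.sum_congr rfl fun i _ => ?_
    have hre : ((t • fun j => (l j : ℂ)) i).re = t * l i := by simp
    rw [Complex.norm_exp, hre, abs_of_pos (Real.exp_pos _), ← mul_assoc, ← mul_pow,
      ← Real.exp_add, ← Real.exp_nat_mul]
    ring_nf
  have hu0_sq : euclNorm u0 ^ 2 = ∑ i, ‖(Qᴴ *ᵥ u0) i‖ ^ 2 := by
    rw [← euclNorm_sq]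
    exact congrArg (· ^ 2) (euclNorm_mulVec_of_mem_unitaryGroup (Unitary.star_mem hQ) u0).symm
  simp_rw [hv_sq]
  rw [integral_sum_exp_neg_mul_abs_sub_mul _ _ _ two_pos,
    integral_Ioi_sum_exp_neg_mul_abs_sub_mul _ _ _ two_pos
      fun i _ => mul_le_mul_of_nonneg_right (hlpub i) ht,
    div_pow, hu_sq, hu0_sq]
  ring

/-- for Hermitian `H₁ = Q Λ Q†` with real diagonal `Λ`,
`λ₊ = max{0, λ₁, …, λₙ}` and `u₀ ≠ 0`, the explicit warped solution
`v(t,p) = Q diag(e^{-|p-λᵢt|}) Q† u₀` and `u(t) = exp(tH₁)u₀` satisfy, for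
`t ≥ 0`,
`(∫_{p ≥ λ₊t} ‖v(t,p)‖² dp) / (∫_ℝ ‖v(t,p)‖² dp)
  = (1/2)(‖e^{-λ₊t} u(t)‖ / ‖u₀‖)²`. -/
theorem stmt6 {n : ℕ} (H1 Q : Matrix (Fin n) (Fin n) ℂ) (l : Fin n → ℝ)
    (hH1 : H1.IsHermitian) (hQ : Q ∈ Matrix.unitaryGroup (Fin n) ℂ)
    (hspec : H1 = Q * Matrix.diagonal (fun i => (l i : ℂ)) * Qᴴ)
    (lp : ℝ) (hlp0 : 0 ≤ lp) (hlpub : ∀ i, l i ≤ lp)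
    (hlpmem : lp = 0 ∨ ∃ i, lp = l i)
    (u0 : Fin n → ℂ) (hu0 : u0 ≠ 0)
    (v : ℝ → ℝ → Fin n → ℂ)
    (hv : ∀ t p : ℝ, v t p =
      (Q * Matrix.diagonal (fun i => (Real.exp (-|p - l i * t|) : ℂ)) * Qᴴ).mulVec u0)
    (u : ℝ → Fin n → ℂ)
    (hu : ∀ t : ℝ, u t = (NormedSpace.exp (t • H1)).mulVec u0) :
    ∀ t : ℝ, 0 ≤ t →
      (∫ p in Set.Ioi (lp * t), (euclNorm (v t p)) ^ 2) / (∫ p : ℝ, (euclNorm (v t p)) ^ 2)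
        = (1 / 2) * (euclNorm (Real.exp (-(lp * t)) • u t) / euclNorm u0) ^ 2 :=
  stmt6_general H1 Q l hQ hspec lp hlpub u0 v hv u hu
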